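/- Let R be a ℚ-algebra, H, H' free R-modules of finite rank, and (H⊗R[[t_I,u]], ∇), (H'⊗R[[t_J,u]], ∇') finite-rank (T)-structures admitting framings, with I, J finite. Let (f,Φ) be a morphism of (T)-structures such that Φ|_{t_I=0} is an isomorphism. Then Φ is uniquely determined by its restriction Φ|_{t_I=0}: any two morphisms (f,Φ₁), (f,Φ₂) over the same base map f with Φ₁|_{t_I=0} = Φ₂|_{t_I=0} are equal. -/

import Mathlib

/-!
Comparing the coefficients of `t^l u^(j+1)` in `u ∂_{t_i}Φ + T'_i Φ = Φ T_i` gives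
`(l_i + 1) · Φ_{t^(l+e_i) u^j} = (Φ T_i - T'_i Φ)_{t^l u^(j+1)}`, and the right-hand side only
involves coefficients of `Φ` of total `t`-degree at most `|l|`. The difference of two morphisms
satisfies the same linear equation and vanishes at `t = 0`, so by induction on the `t`-degree all
its coefficients vanish; the factor `l_i + 1` is invertible because `R` is a `ℚ`-algebra.
-/

noncomputable section

open MvPowerSeries

/-- The formal partial derivative of a multivariate formal power series in the `i`-th
variable, defined coefficientwise. -/
def fpderiv {m : ℕ} {A : Type*} [Ring A] (i : Fin m) (f : MvPowerSeries (Fin m) A) :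
    MvPowerSeries (Fin m) A :=
  fun k => ((k i : ℕ) + 1) • f (k + Finsupp.single i 1)

open Finsupp

section fpderiv

variable {m : ℕ} {A : Type*} [Ring A]

theorem coeff_fpderiv (i : Fin m) (f : MvPowerSeries (Fin m) A) (k : Fin m →₀ ℕ) :
    coeff k (fpderiv i f) = (k i + 1) • coeff (k + single i 1) f :=
  rfl

theorem fpderiv_sub (i : Fin m) (f g : MvPowerSeries (Fin m) A) :
    fpderiv i (f - g) = fpderiv i f - fpderiv i g := by
  ext k
  simp only [coeff_fpderiv, map_sub, smul_sub]

end fpderiv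

theorem eq_zero_of_nsmul_succ_eq_zero {M : Type*} [AddCommGroup M] [Module ℚ M] {x : M} {n : ℕ}
    (h : (n + 1) • x = 0) : x = 0 := by
  rw [← Nat.cast_smul_eq_nsmul ℚ] at h
  exact (smul_eq_zero.mp h).resolve_left (by positivity)

section vanishing

variable {σ R ι κ ν : Type*} [Semiring R]

theorem MvPowerSeries.coeff_mul_eq_zero_of_forall_le_left {f : MvPowerSeries σ R}
    (g : MvPowerSeries σ R) {k : σ →₀ ℕ} (hf : ∀ l ≤ k, coeff l f = 0) :
    coeff k (f * g) = 0 := by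
  classical
  rw [coeff_mul]
  refine Finset.sum_eq_zero fun x hx => ?_
  rw [hf x.1 ((Finset.HasAntidiagonal.mem_antidiagonal.mp hx) ▸ le_self_add), zero_mul]

theorem MvPowerSeries.coeff_mul_eq_zero_of_forall_le_right (f : MvPowerSeries σ R)
    {g : MvPowerSeries σ R} {k : σ →₀ ℕ} (hg : ∀ l ≤ k, coeff l g = 0) :
    coeff k (f * g) = 0 := by
  classical
  rw [coeff_mul]
  refine Finset.sum_eq_zero fun x hx => ?_
  rw [hg x.2 ((Finset.HasAntidiagonal.mem_antidiagonal.mp hx) ▸ le_add_self), mul_zero]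

variable [Fintype κ]

theorem Matrix.coeff_mul_apply_eq_zero_of_forall_le_left {M : Matrix ι κ (MvPowerSeries σ R)}
    (T : Matrix κ ν (MvPowerSeries σ R)) {k : σ →₀ ℕ}
    (hM : ∀ l ≤ k, ∀ p q, coeff l (M p q) = 0) (p : ι) (q : ν) :
    coeff k ((M * T) p q) = 0 := by
  simp only [Matrix.mul_apply, map_sum]
  exact Finset.sum_eq_zero fun r _ =>
    coeff_mul_eq_zero_of_forall_le_left _ fun l hl => hM l hl p r

theorem Matrix.coeff_mul_apply_eq_zero_of_forall_le_right (T : Matrix ι κ (MvPowerSeries σ R))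
    {M : Matrix κ ν (MvPowerSeries σ R)} {k : σ →₀ ℕ}
    (hM : ∀ l ≤ k, ∀ p q, coeff l (M p q) = 0) (p : ι) (q : ν) :
    coeff k ((T * M) p q) = 0 := by
  simp only [Matrix.mul_apply, map_sum]
  exact Finset.sum_eq_zero fun r _ =>
    coeff_mul_eq_zero_of_forall_le_right _ fun l hl => hM l hl r q

end vanishing

theorem nsmul_coeff_eq_of_intertwines {m : ℕ} {R ι κ : Type*} [Ring R] [Fintype ι] [Fintype κ]
    {D : Matrix ι κ (MvPowerSeries (Fin m) R)} {A : Matrix ι ι (MvPowerSeries (Fin m) R)}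
    {B : Matrix κ κ (MvPowerSeries (Fin m) R)} {u i : Fin m}
    (h : (X u : MvPowerSeries (Fin m) R) • D.map (fpderiv i) + A * D = D * B)
    (p : ι) (q : κ) (l : Fin m →₀ ℕ) :
    (l i + 1) • coeff (l + single i 1) (D p q) =
      coeff (l + single u 1) ((D * B) p q - (A * D) p q) := by
  have := congrArg (fun M => coeff (single u 1 + l) (M p q)) h
  simp only [Matrix.add_apply, Matrix.smul_apply, Matrix.map_apply, smul_eq_mul, map_add, X,
    coeff_add_monomial_mul, one_mul, coeff_fpderiv] at this
  rw [add_comm (single u 1) l] at this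
  rwa [map_sub, eq_sub_iff_add_eq]

section tDegree

variable {a : ℕ}

def tDegree (k : Fin (a + 1) →₀ ℕ) : ℕ :=
  ∑ i : Fin a, k i.castSucc

theorem tDegree_add (k l : Fin (a + 1) →₀ ℕ) : tDegree (k + l) = tDegree k + tDegree l := by
  simp only [tDegree, Finsupp.add_apply, Finset.sum_add_distrib]

theorem tDegree_mono : Monotone (tDegree (a := a)) :=
  fun _ _ h => Finset.sum_le_sum fun i _ => h i.castSucc

@[simp]
theorem tDegree_single_last (n : ℕ) : tDegree (single (Fin.last a) n) = 0 := by
  simp [tDegree]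

@[simp]
theorem tDegree_single_castSucc (i : Fin a) (n : ℕ) : tDegree (single i.castSucc n) = n := by
  simp [tDegree, single_apply, Fin.castSucc_inj]

theorem tDegree_eq_zero_iff {k : Fin (a + 1) →₀ ℕ} :
    tDegree k = 0 ↔ ∀ i : Fin a, k i.castSucc = 0 := by
  simp [tDegree]

end tDegree

theorem eq_zero_of_intertwines_of_coeff_eq_zero {a : ℕ} {R ι κ : Type*} [Ring R]
    [Module ℚ R] [Fintype ι] [Fintype κ] {D : Matrix ι κ (MvPowerSeries (Fin (a + 1)) R)}
    {A : Fin a → Matrix ι ι (MvPowerSeries (Fin (a + 1)) R)}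
    {B : Fin a → Matrix κ κ (MvPowerSeries (Fin (a + 1)) R)}
    (hD : ∀ i : Fin a, (X (Fin.last a) : MvPowerSeries (Fin (a + 1)) R) •
      D.map (fpderiv i.castSucc) + A i * D = D * B i)
    (h0 : ∀ p q k, tDegree k = 0 → coeff k (D p q) = 0) :
    D = 0 := by
  suffices ∀ n k, tDegree k = n → ∀ p q, coeff k (D p q) = 0 by
    ext p q k
    exact this _ k rfl p q
  intro n
  induction n using Nat.strong_induction_on with
  | _ n IH =>
  intro k hk p q
  obtain rfl | hn := eq_or_ne n 0
  · exact h0 p q k hk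
  obtain ⟨i, hi⟩ : ∃ i : Fin a, k i.castSucc ≠ 0 := by
    contrapose! hn
    exact hk ▸ tDegree_eq_zero_iff.mpr hn
  obtain ⟨l, rfl⟩ : ∃ l, k = l + single i.castSucc 1 :=
    ⟨k - single i.castSucc 1, (sub_add_single_one_cancel hi).symm⟩
  have hlow : ∀ m ≤ l + single (Fin.last a) 1, ∀ p q, coeff m (D p q) = 0 := by
    refine fun m hm => IH _ ?_ m rfl
    have := tDegree_mono hm
    simp only [tDegree_add, tDegree_single_last, tDegree_single_castSucc] at this hk
    omega
  have key := nsmul_coeff_eq_of_intertwines (hD i) p q l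
  rw [map_sub, Matrix.coeff_mul_apply_eq_zero_of_forall_le_left _ hlow,
    Matrix.coeff_mul_apply_eq_zero_of_forall_le_right _ hlow, sub_zero] at key
  exact eq_zero_of_nsmul_succ_eq_zero key

theorem stmt18_general {a N N' : ℕ} {R : Type*} [CommRing R] [Algebra ℚ R]
    (T : Fin a → Matrix (Fin N) (Fin N) (MvPowerSeries (Fin (a + 1)) R))
    (T' : Fin a → Matrix (Fin N') (Fin N') (MvPowerSeries (Fin (a + 1)) R))
    (Φ₁ Φ₂ : Matrix (Fin N') (Fin N) (MvPowerSeries (Fin (a + 1)) R))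
    -- both intertwine the connections: `u ∂_{t_i}Φ + T'_i Φ = Φ T_i`
    (h1 : ∀ i : Fin a,
      (X (Fin.last a) : MvPowerSeries (Fin (a + 1)) R) • (Φ₁.map (fpderiv i.castSucc))
        + T' i * Φ₁ = Φ₁ * T i)
    (h2 : ∀ i : Fin a,
      (X (Fin.last a) : MvPowerSeries (Fin (a + 1)) R) • (Φ₂.map (fpderiv i.castSucc))
        + T' i * Φ₂ = Φ₂ * T i)
    -- they agree at `t = 0`
    (hres : ∀ (p : Fin N') (q : Fin N) (k : Fin (a + 1) →₀ ℕ),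
      (∀ i : Fin a, k i.castSucc = 0) → Φ₁ p q k = Φ₂ p q k) :
    Φ₁ = Φ₂ := by
  rw [← sub_eq_zero]
  refine eq_zero_of_intertwines_of_coeff_eq_zero (A := T') (B := T) (fun i => ?_)
    fun p q k hk => ?_
  · rw [Matrix.map_sub _ (fpderiv_sub _), smul_sub, Matrix.mul_sub, Matrix.sub_mul, ← h1, ← h2]
    abel
  · exact sub_eq_zero.mpr (hres p q k (tDegree_eq_zero_iff.mp hk))

theorem stmt18 {a N N' : ℕ} {R : Type*} [CommRing R] [Algebra ℚ R]
    (T : Fin a → Matrix (Fin N) (Fin N) (MvPowerSeries (Fin (a + 1)) R))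
    (T' : Fin a → Matrix (Fin N') (Fin N') (MvPowerSeries (Fin (a + 1)) R))
    -- framing: the connection matrices are independent of `u`
    (hT : ∀ (i : Fin a) (p q : Fin N) (k : Fin (a + 1) →₀ ℕ),
      k (Fin.last a) ≠ 0 → T i p q k = 0)
    (hT' : ∀ (i : Fin a) (p q : Fin N') (k : Fin (a + 1) →₀ ℕ),
      k (Fin.last a) ≠ 0 → T' i p q k = 0)
    (Φ₁ Φ₂ : Matrix (Fin N') (Fin N) (MvPowerSeries (Fin (a + 1)) R))
    -- both intertwine the connections: `u ∂_{t_i}Φ + T'_i Φ = Φ T_i`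
    (h1 : ∀ i : Fin a,
      (X (Fin.last a) : MvPowerSeries (Fin (a + 1)) R) • (Φ₁.map (fpderiv i.castSucc))
        + T' i * Φ₁ = Φ₁ * T i)
    (h2 : ∀ i : Fin a,
      (X (Fin.last a) : MvPowerSeries (Fin (a + 1)) R) • (Φ₂.map (fpderiv i.castSucc))
        + T' i * Φ₂ = Φ₂ * T i)
    -- they agree at `t = 0`
    (hres : ∀ (p : Fin N') (q : Fin N) (k : Fin (a + 1) →₀ ℕ),
      (∀ i : Fin a, k i.castSucc = 0) → Φ₁ p q k = Φ₂ p q k) :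
    Φ₁ = Φ₂ :=
  stmt18_general T T' Φ₁ Φ₂ h1 h2 hres
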